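/- Let d ≥ 1 and 2 ≤ p < ∞. Then γ_{d,p}² ≥ (d/(3(d+2))) · (Γ(1+3/p)/Γ(1+1/p)) · (p/d)^{2/p}. -/

import Mathlib

open MeasureTheory

noncomputable section

/-- The unit ball of `ℓ_p^d`, as a subset of Euclidean space. -/
def lpBall (d : ℕ) (p : ℝ) : Set (EuclideanSpace ℝ (Fin d)) :=
  {x | ∑ i, |x i| ^ p ≤ 1}

/-- `γ_{d,p}²`, the normalized second moment of the first coordinate over the
`ℓ_p`-unit ball. (Junk value `0` for `d = 0`.) -/
def gammaSq (d : ℕ) (p : ℝ) : ℝ :=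
  if hd : 0 < d then
    (∫ x in lpBall d p, (x ⟨0, hd⟩) ^ 2) / (volume (lpBall d p)).toReal
  else 0

section Aux

open MeasureTheory.Measure Set Metric Real

local notation "dim" => Module.finrank ℝ

variable {E : Type*} [NormedAddCommGroup E] [NormedSpace ℝ E] [MeasurableSpace E]
  [BorelSpace E] [Nontrivial E] [FiniteDimensional ℝ E]

lemma lemA (μ : Measure E) [μ.IsAddHaarMeasure]
    (g : E → ℝ) (hg : ∀ (r : ℝ) (x : E), g (r • x) = r ^ 2 * g x) (f : ℝ → ℝ) :
    ∫ x, g x * f ‖x‖ ∂μ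
      = (∫ θ : sphere (0:E) 1, g θ.1 ∂μ.toSphere)
        * ∫ r in Ioi (0:ℝ), r ^ (dim E + 1) * f r := by
  have hn : 1 ≤ dim E := Module.finrank_pos
  set F : sphere (0:E) 1 × Ioi (0:ℝ) → ℝ := fun z => g z.1.1 * ((z.2.1) ^ 2 * f z.2.1) with hF
  calc
    ∫ x, g x * f ‖x‖ ∂μ = ∫ x : ({(0:E)}ᶜ : Set E), g x.1 * f ‖x.1‖ ∂(μ.comap (↑)) := by
      rw [integral_subtype_comap (measurableSet_singleton _).compl fun x ↦ g x * f ‖x‖,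
        restrict_compl_singleton]
    _ = ∫ x : ({(0:E)}ᶜ : Set E), F (homeomorphUnitSphereProd E x) ∂(μ.comap (↑)) := by
      refine integral_congr_ae (Filter.Eventually.of_forall fun x => ?_)
      have hx : x.1 ≠ 0 := x.2
      have hnx : ‖x.1‖ ≠ 0 := norm_ne_zero_iff.2 hx
      simp only [hF, homeomorphUnitSphereProd, homeomorphSphereProd, Homeomorph.homeomorph_mk_coe, Equiv.coe_fn_mk,
        one_smul, div_one]
      rw [hg]
      field_simp
    _ = ∫ z, F z ∂(μ.toSphere.prod (volumeIoiPow (dim E - 1))) :=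
      (μ.measurePreserving_homeomorphUnitSphereProd.integral_comp
        (Homeomorph.measurableEmbedding _) F)
    _ = (∫ θ : sphere (0:E) 1, g θ.1 ∂μ.toSphere)
          * ∫ r : Ioi (0:ℝ), (r.1 ^ 2 * f r.1) ∂(volumeIoiPow (dim E - 1)) :=
      integral_prod_mul (fun θ : sphere (0:E) 1 => g θ.1) (fun r : Ioi (0:ℝ) => r.1 ^ 2 * f r.1)
    _ = _ := by
      congr 1
      simp only [Measure.volumeIoiPow, ENNReal.ofReal]
      rw [integral_withDensity_eq_integral_smul
        ((measurable_subtype_coe.pow_const _).real_toNNReal),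
        integral_subtype_comap measurableSet_Ioi
          (fun a : ℝ ↦ Real.toNNReal (a ^ (dim E - 1)) • (a ^ 2 * f a)),
        setIntegral_congr_fun measurableSet_Ioi (fun x hx ↦ ?_)]
      rw [NNReal.smul_def, Real.coe_toNNReal _ (pow_nonneg hx.out.le _), smul_eq_mul,
        ← mul_assoc, ← pow_add]
      congr 2
      omega

lemma lemB (μ : Measure E) [μ.IsAddHaarMeasure]
    (g : E → ℝ) (hg : ∀ (r : ℝ) (x : E), g (r • x) = r ^ 2 * g x) :
    ∫ x in closedBall (0:E) 1, g x ∂μ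
      = (∫ θ : sphere (0:E) 1, g θ.1 ∂μ.toSphere) / (dim E + 2) := by
  have h1 : ∫ x in closedBall (0:E) 1, g x ∂μ
      = ∫ x, g x * (Iic (1:ℝ)).indicator (fun _ => (1:ℝ)) ‖x‖ ∂μ := by
    rw [← integral_indicator (measurableSet_closedBall)]
    refine integral_congr_ae (Filter.Eventually.of_forall fun x => ?_)
    by_cases hx : ‖x‖ ≤ 1 <;> simp [Set.indicator_apply, hx, mem_closedBall_zero_iff]
  rw [h1, lemA μ g hg]
  congr 1
  have h2 : ∀ r ∈ Ioi (0:ℝ), r ^ (dim E + 1) * (Iic (1:ℝ)).indicator (fun _ => (1:ℝ)) r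
      = (Iic (1:ℝ)).indicator (fun r => r ^ (dim E + 1)) r := by
    intro r _
    by_cases hr : r ≤ 1 <;> simp [Set.indicator_apply, hr]
  rw [setIntegral_congr_fun measurableSet_Ioi h2, setIntegral_indicator measurableSet_Iic]
  have : Ioi (0:ℝ) ∩ Iic 1 = Ioc (0:ℝ) 1 := by ext x; simp [and_comm]
  rw [this, ← intervalIntegral.integral_of_le zero_le_one, integral_pow]
  push_cast
  ring

lemma gamma_key {a s : ℝ} (ha : 0 < a) (hs0 : 0 ≤ s) (hs1 : s ≤ 1) :
    Real.Gamma (a + s) ≤ Real.Gamma a * a ^ s := by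
  have hGa : 0 < Real.Gamma a := Real.Gamma_pos_of_pos ha
  have hGa1 : 0 < Real.Gamma (a + 1) := Real.Gamma_pos_of_pos (by linarith)
  have hGas : 0 < Real.Gamma (a + s) := Real.Gamma_pos_of_pos (by linarith)
  have h := Real.convexOn_log_Gamma.2 (Set.mem_Ioi.2 ha)
    (Set.mem_Ioi.2 (by linarith : (0:ℝ) < a + 1)) (by linarith : (0:ℝ) ≤ 1 - s) hs0
    (by ring)
  have hx : (1 - s) • a + s • (a + 1) = a + s := by simp [smul_eq_mul]; ring
  rw [hx] at h
  simp only [Function.comp_apply, smul_eq_mul] at h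
  have hlog : Real.log (Real.Gamma (a + 1)) = Real.log a + Real.log (Real.Gamma a) := by
    rw [Real.Gamma_add_one ha.ne', Real.log_mul ha.ne' hGa.ne']
  rw [hlog] at h
  have h2 : Real.log (Real.Gamma (a + s)) ≤ Real.log (Real.Gamma a) + s * Real.log a := by
    nlinarith [h]
  calc Real.Gamma (a + s) = Real.exp (Real.log (Real.Gamma (a + s))) := (Real.exp_log hGas).symm
    _ ≤ Real.exp (Real.log (Real.Gamma a) + s * Real.log a) := Real.exp_le_exp.2 h2
    _ = Real.Gamma a * a ^ s := by
        rw [Real.exp_add, Real.exp_log hGa, ← Real.log_rpow ha, Real.exp_log (Real.rpow_pos_of_pos ha _)]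

lemma lemC (d : ℕ) (hd : 1 ≤ d) {p : ℝ} (hp : 1 ≤ p) :
    ∫ y in {y : Fin d → ℝ | ∑ i, |y i| ^ p ≤ 1}, (y ⟨0, hd⟩) ^ 2
      = 2 * Real.Gamma (3 / p) * (2 * Real.Gamma (1 / p + 1)) ^ (d - 1)
        / ((d + 2) * Real.Gamma ((d + 2) / p)) := by
  have hp0 : (0:ℝ) < p := by linarith
  set q : ENNReal := ENNReal.ofReal p with hq
  haveI : Fact (1 ≤ q) := ⟨by rw [hq, ← ENNReal.ofReal_one]; exact ENNReal.ofReal_le_ofReal hp⟩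
  have hqt : q.toReal = p := ENNReal.toReal_ofReal hp0.le
  haveI : Nonempty (Fin d) := ⟨⟨0, hd⟩⟩
  set F := PiLp q (fun _ : Fin d => ℝ) with hF
  letI : MeasurableSpace F := borel F
  haveI : BorelSpace F := ⟨rfl⟩
  set e : F ≃L[ℝ] (Fin d → ℝ) := PiLp.continuousLinearEquiv q ℝ _ with he
  haveI : Nontrivial F := e.toEquiv.nontrivial
  set ν : Measure F := volume.map e.symm with hν
  haveI : ν.IsAddHaarMeasure := e.symm.isAddHaarMeasure_map volume
  have mp : MeasurePreserving (⇑e) ν volume := by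
    refine ⟨e.continuous.measurable, ?_⟩
    rw [hν, Measure.map_map e.continuous.measurable e.symm.continuous.measurable]
    simp
  have hrank : Module.finrank ℝ F = d := by
    rw [e.toLinearEquiv.finrank_eq]
    simp [Module.finrank_fintype_fun_eq_card]
  set g : F → ℝ := fun x => (e x ⟨0, hd⟩) ^ 2 with hg_def
  have hg : ∀ (r : ℝ) (x : F), g (r • x) = r ^ 2 * g x := by
    intro r x
    have hsm : e (r • x) = r • e x := _root_.map_smul e r x
    simp only [hg_def, hsm, Pi.smul_apply, smul_eq_mul]
    ring
  -- norm on F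
  have hnorm : ∀ x : F, ‖x‖ = (∑ i, |e x i| ^ p) ^ (1 / p) := by
    intro x
    rw [PiLp.norm_eq_sum (by rw [hqt]; exact hp0) x]
    simp [hqt]
    rfl
  have hnorm_pow : ∀ x : F, ‖x‖ ^ p = ∑ i, |e x i| ^ p := by
    intro x
    rw [hnorm x, ← Real.rpow_mul (by positivity), one_div_mul_cancel hp0.ne', Real.rpow_one]
  -- the closed ball is the preimage of the set
  have hball : closedBall (0:F) 1 = ⇑e ⁻¹' {y : Fin d → ℝ | ∑ i, |y i| ^ p ≤ 1} := by
    ext x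
    simp only [mem_closedBall_zero_iff, mem_preimage, mem_setOf_eq]
    rw [hnorm x]
    constructor
    · intro h
      have h2 : ((∑ i, |e x i| ^ p) ^ (1 / p)) ^ p ≤ 1 ^ p := by
        exact Real.rpow_le_rpow (Real.rpow_nonneg (by positivity) _) h hp0.le
      rwa [← Real.rpow_mul (by positivity), one_div_mul_cancel hp0.ne', Real.rpow_one,
        Real.one_rpow] at h2
    · intro h
      calc (∑ i, |e x i| ^ p) ^ (1 / p) ≤ 1 ^ (1/p) :=
            Real.rpow_le_rpow (by positivity) h (by positivity)
        _ = 1 := Real.one_rpow _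
  -- transfer the moment integral
  have hM : ∫ y in {y : Fin d → ℝ | ∑ i, |y i| ^ p ≤ 1}, (y ⟨0, hd⟩) ^ 2
      = ∫ x in closedBall (0:F) 1, g x ∂ν := by
    rw [hball, mp.setIntegral_preimage_emb (e.toHomeomorph.measurableEmbedding)
      (fun y => (y ⟨0, hd⟩) ^ 2)]
  -- compute the full-space exponential-weighted integral by Fubini
  have hA : ∫ x, g x * Real.exp (-‖x‖ ^ p) ∂ν
      = (2 / p * Real.Gamma (3 / p)) * (2 * Real.Gamma (1 / p + 1)) ^ (d - 1) := by
    have step1 : ∫ x, g x * Real.exp (-‖x‖ ^ p) ∂ν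
        = ∫ y : Fin d → ℝ, (y ⟨0, hd⟩) ^ 2 * Real.exp (-∑ i, |y i| ^ p) := by
      rw [← mp.integral_comp (e.toHomeomorph.measurableEmbedding)
        (fun y : Fin d → ℝ => (y ⟨0, hd⟩) ^ 2 * Real.exp (-∑ i, |y i| ^ p))]
      refine integral_congr_ae (Filter.Eventually.of_forall fun x => ?_)
      show g x * Real.exp (-‖x‖ ^ p) = e x ⟨0, hd⟩ ^ 2 * Real.exp (-∑ i, |e x i| ^ p)
      rw [← hnorm_pow x]
    rw [step1]
    have step2 : ∀ y : Fin d → ℝ, (y ⟨0, hd⟩) ^ 2 * Real.exp (-∑ i, |y i| ^ p)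
        = ∏ i, ((if i = (⟨0, hd⟩ : Fin d) then (y i) ^ 2 else 1) * Real.exp (-|y i| ^ p)) := by
      intro y
      rw [Finset.prod_mul_distrib, Finset.prod_ite_eq' Finset.univ (⟨0, hd⟩ : Fin d)
        (fun i => (y i) ^ 2), if_pos (Finset.mem_univ _), ← Real.exp_sum]
      congr 2
      exact (Finset.sum_neg_distrib _).symm
    simp_rw [step2]
    rw [volume_pi, MeasureTheory.integral_fintype_prod_eq_prod
      (f := fun i t => (if i = (⟨0, hd⟩ : Fin d) then t ^ 2 else 1) * Real.exp (-|t| ^ p))]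
    have hI1 : ∫ t : ℝ, Real.exp (-|t| ^ p) = 2 * Real.Gamma (1 / p + 1) := by
      rw [integral_comp_abs (f := fun t => Real.exp (-t ^ p)), integral_exp_neg_rpow hp0]
    have hI2 : ∫ t : ℝ, t ^ 2 * Real.exp (-|t| ^ p) = 2 / p * Real.Gamma (3 / p) := by
      have habs : ∀ t : ℝ, t ^ 2 * Real.exp (-|t| ^ p) = |t| ^ 2 * Real.exp (-|t| ^ p) := by
        intro t; rw [sq_abs]
      simp_rw [habs]
      rw [integral_comp_abs (f := fun t => t ^ 2 * Real.exp (-t ^ p))]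
      have : ∀ t ∈ Ioi (0:ℝ), t ^ 2 * Real.exp (-t ^ p) = t ^ (2:ℝ) * Real.exp (-t ^ p) := by
        intro t ht
        rw [show (2:ℝ) = ((2:ℕ):ℝ) by norm_num, Real.rpow_natCast]
      rw [setIntegral_congr_fun measurableSet_Ioi this,
        integral_rpow_mul_exp_neg_rpow hp0 (by norm_num : (-1:ℝ) < 2)]
      norm_num
      ring
    calc ∏ i, ∫ t : ℝ, (if i = (⟨0, hd⟩ : Fin d) then t ^ 2 else 1) * Real.exp (-|t| ^ p)
        = (∫ t : ℝ, t ^ 2 * Real.exp (-|t| ^ p))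
            * ∏ i ∈ Finset.univ.erase (⟨0, hd⟩ : Fin d),
              ∫ t : ℝ, Real.exp (-|t| ^ p) := by
          rw [← Finset.mul_prod_erase Finset.univ _ (Finset.mem_univ (⟨0, hd⟩ : Fin d))]
          simp only [if_pos rfl, one_mul]
          congr 1
          refine Finset.prod_congr rfl fun i hi => ?_
          simp only [if_neg (Finset.ne_of_mem_erase hi), one_mul]
      _ = (2 / p * Real.Gamma (3 / p)) * (2 * Real.Gamma (1 / p + 1)) ^ (d - 1) := by
          rw [hI2, Finset.prod_const, hI1, Finset.card_erase_of_mem (Finset.mem_univ _),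
            Finset.card_univ, Fintype.card_fin]
  -- apply lemA and lemB
  have hR : ∫ r in Ioi (0:ℝ), r ^ (Module.finrank ℝ F + 1) * Real.exp (-r ^ p)
      = 1 / p * Real.Gamma ((d + 2) / p) := by
    have : ∀ r ∈ Ioi (0:ℝ), r ^ (Module.finrank ℝ F + 1) * Real.exp (-r ^ p)
        = r ^ ((d + 1 : ℕ) : ℝ) * Real.exp (-r ^ p) := by
      intro r hr
      rw [Real.rpow_natCast, hrank]
    rw [setIntegral_congr_fun measurableSet_Ioi this,
      integral_rpow_mul_exp_neg_rpow hp0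
        (by push_cast; linarith [show (0:ℝ) ≤ (d:ℝ) from Nat.cast_nonneg d])]
    congr 2
    push_cast
    ring
  have hlemA := lemA ν g hg (fun r => Real.exp (-r ^ p))
  rw [hA, hR] at hlemA
  have hlemB := lemB ν g hg
  rw [← hM, hrank] at hlemB
  -- solve
  have hGpos : 0 < Real.Gamma ((d + 2) / p) := Real.Gamma_pos_of_pos (by positivity)
  have hS : (∫ θ : sphere (0:F) 1, g θ.1 ∂ν.toSphere)
      = 2 * Real.Gamma (3 / p) * (2 * Real.Gamma (1 / p + 1)) ^ (d - 1)
        / Real.Gamma ((d + 2) / p) := by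
    have h1p : (1 / p) * Real.Gamma ((d + 2) / p) ≠ 0 := by positivity
    field_simp at hlemA ⊢
    nlinarith [hlemA]
  rw [hlemB, hS]
  have : ((d:ℝ) + 2) ≠ 0 := by positivity
  field_simp

lemma lemD (d : ℕ) (hd : 1 ≤ d) {p : ℝ} (hp : 1 ≤ p) :
    volume {y : Fin d → ℝ | ∑ i, |y i| ^ p ≤ 1}
      = ENNReal.ofReal ((2 * Real.Gamma (1 / p + 1)) ^ d / Real.Gamma (d / p + 1)) := by
  have hp0 : (0:ℝ) < p := by linarith
  haveI : Nonempty (Fin d) := ⟨⟨0, hd⟩⟩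
  have hset : {y : Fin d → ℝ | ∑ i, |y i| ^ p ≤ 1}
      = {y : Fin d → ℝ | (∑ i, |y i| ^ p) ^ (1 / p) ≤ (1:ℝ)} := by
    ext y
    simp only [mem_setOf_eq]
    constructor
    · intro h
      calc (∑ i, |y i| ^ p) ^ (1 / p) ≤ 1 ^ (1 / p) :=
            Real.rpow_le_rpow (by positivity) h (by positivity)
        _ = 1 := Real.one_rpow _
    · intro h
      have h2 : ((∑ i, |y i| ^ p) ^ (1 / p)) ^ p ≤ 1 ^ p :=
        Real.rpow_le_rpow (Real.rpow_nonneg (by positivity) _) h hp0.le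
      rwa [← Real.rpow_mul (by positivity), one_div_mul_cancel hp0.ne', Real.rpow_one,
        Real.one_rpow] at h2
  rw [hset, MeasureTheory.volume_sum_rpow_le (Fin d) hp 1]
  simp [Fintype.card_fin]

theorem stmt1 (d : ℕ) (hd : 1 ≤ d) (p : ℝ) (hp : 2 ≤ p) :
    (d / (3 * (d + 2)) : ℝ) * (Real.Gamma (1 + 3 / p) / Real.Gamma (1 + 1 / p)) *
        (p / d) ^ ((2 : ℝ) / p) ≤ gammaSq d p := by
  have hp1 : (1:ℝ) ≤ p := by linarith
  have hp0 : (0:ℝ) < p := by linarith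
  have hd0 : (0:ℝ) < d := by exact_mod_cast hd
  have hdpos : 0 < d := hd
  -- transfer to the Pi type
  set Sset : Set (Fin d → ℝ) := {y : Fin d → ℝ | ∑ i, |y i| ^ p ≤ 1} with hSset
  have hSm : MeasurableSet Sset := by
    have hc : Continuous fun y : Fin d → ℝ => ∑ i, |y i| ^ p :=
      continuous_finset_sum _ fun i _ =>
        ((continuous_apply i).abs).rpow_const (fun x => Or.inr hp0.le)
    exact (isClosed_le hc continuous_const).measurableSet
  have hmpE := EuclideanSpace.volume_preserving_symm_measurableEquiv_toLp (Fin d)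
  set φ := (MeasurableEquiv.toLp 2 (Fin d → ℝ)).symm with hφ
  have hpre : lpBall d p = ⇑φ ⁻¹' Sset := by
    ext x
    simp only [lpBall, mem_setOf_eq, mem_preimage, hSset]
    rfl
  have hvol : volume (lpBall d p) = volume Sset := by
    rw [hpre]
    exact hmpE.measure_preimage hSm.nullMeasurableSet
  have hint : (∫ x in lpBall d p, (x ⟨0, hdpos⟩) ^ 2)
      = ∫ y in Sset, (y ⟨0, hd⟩) ^ 2 := by
    rw [hpre]
    exact hmpE.setIntegral_preimage_emb φ.measurableEmbedding
      (fun y => (y ⟨0, hd⟩) ^ 2) Sset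
  -- Gamma abbreviations
  set G1 := Real.Gamma (1 / p + 1) with hG1
  set G3 := Real.Gamma (3 / p) with hG3
  set Gd := Real.Gamma ((d:ℝ) / p + 1) with hGd
  set Gd2 := Real.Gamma (((d:ℝ) + 2) / p) with hGd2
  set Ga := Real.Gamma ((d:ℝ) / p) with hGa
  have hG1p : 0 < G1 := Real.Gamma_pos_of_pos (by positivity)
  have hG3p : 0 < G3 := Real.Gamma_pos_of_pos (by positivity)
  have hGdp : 0 < Gd := Real.Gamma_pos_of_pos (by positivity)
  have hGd2p : 0 < Gd2 := Real.Gamma_pos_of_pos (by positivity)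
  have hGap : 0 < Ga := Real.Gamma_pos_of_pos (by positivity)
  -- compute gammaSq
  have hVreal : (volume (lpBall d p)).toReal = (2 * G1) ^ d / Gd := by
    rw [hvol, hSset, lemD d hd hp1, ENNReal.toReal_ofReal (by positivity)]
  have hgs : gammaSq d p
      = 2 * G3 * (2 * G1) ^ (d - 1) / (((d:ℝ) + 2) * Gd2) * Gd / (2 * G1) ^ d := by
    rw [gammaSq, dif_pos hdpos, hint, hSset, lemC d hd hp1, hVreal,
      ← hG3, ← hG1, ← hGd2, div_div_eq_mul_div]
  have hpow : (2 * G1) ^ d = (2 * G1) ^ (d - 1) * (2 * G1) := by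
    rw [← pow_succ]
    congr 1
    omega
  have hgs2 : gammaSq d p = G3 * Gd / (((d:ℝ) + 2) * Gd2 * G1) := by
    rw [hgs, hpow]
    have h1 : (0:ℝ) < (2 * G1) ^ (d - 1) := by positivity
    field_simp
  -- the Gamma inequality
  have hkey : Gd2 ≤ Ga * ((d:ℝ) / p) ^ ((2:ℝ) / p) := by
    have h := gamma_key (a := (d:ℝ) / p) (s := 2 / p) (by positivity) (by positivity)
      (by rw [div_le_one hp0]; linarith)
    have harg : (d:ℝ) / p + 2 / p = ((d:ℝ) + 2) / p := by ring
    rw [harg] at h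
    exact h
  -- rewrite the target
  have hGd_eq : Gd = ((d:ℝ) / p) * Ga := by
    rw [hGd, hGa, Real.Gamma_add_one (by positivity)]
  have hG3' : Real.Gamma (1 + 3 / p) = (3 / p) * G3 := by
    rw [show (1:ℝ) + 3 / p = 3 / p + 1 by ring, Real.Gamma_add_one (by positivity)]
  have hG1' : Real.Gamma (1 + 1 / p) = G1 := by rw [hG1]; congr 1; ring
  have hrpowpos : (0:ℝ) < ((d:ℝ) / p) ^ ((2:ℝ) / p) := Real.rpow_pos_of_pos (by positivity) _
  have hflip : (p / d : ℝ) ^ ((2:ℝ) / p) = (((d:ℝ) / p) ^ ((2:ℝ) / p))⁻¹ := by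
    rw [← inv_div (d:ℝ) p, Real.inv_rpow (by positivity)]
  have h2 : (d / (3 * (d + 2)) : ℝ) * (Real.Gamma (1 + 3 / p) / Real.Gamma (1 + 1 / p)) *
        (p / d) ^ ((2 : ℝ) / p)
      = G3 * Gd / (((d:ℝ) + 2) * (Ga * (((d:ℝ) / p) ^ ((2:ℝ) / p))) * G1) := by
    rw [hG3', hG1', hflip, hGd_eq]
    field_simp
  rw [hgs2, h2]
  have hD : ((d:ℝ) + 2) * Gd2 * G1 ≤ ((d:ℝ) + 2) * (Ga * (((d:ℝ) / p) ^ ((2:ℝ) / p))) * G1 := by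
    refine mul_le_mul_of_nonneg_right ?_ hG1p.le
    exact mul_le_mul_of_nonneg_left hkey (by positivity)
  exact div_le_div_of_nonneg_left (by positivity) (by positivity) hD

end Aux

end
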